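/- Let λ be a σ-finite Borel measure on ℝ, let δ > 0, and let a : ℝ → [0,∞) be measurable with M(s; a) < ∞ for all s ∈ [-δ, δ]. Let f : ℝ → ℝ be measurable with ∫ f(x)² a(x) dλ(x) < ∞, and suppose that for every k ∈ ℕ₀ one has ∫ x^k f(x) a(x) dλ(x) = 0. Then for every t ∈ [-δ/2, δ/2], the function x ↦ e^{tx} f(x) a(x) is λ-integrable and ∫ e^{tx} f(x) a(x) dλ(x) = 0. -/

import Mathlib

/-! By AM–GM, `e^{|tx|} |f| ≤ e^{2tx} + e^{-2tx} + f²`, so for `|t| ≤ δ/2` the function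
`e^{|tx|} f a` is `λ`-integrable. It dominates every partial sum of the exponential series of
`e^{tx} f(x) a(x)`, so dominated convergence gives `∫ e^{tx} f a dλ = ∑ tⁿ/n! ∫ xⁿ f a dλ`, and every
term of this series is a vanishing moment. -/

open MeasureTheory Real
open scoped Nat

lemma exp_abs_mul_abs_le (u v : ℝ) : exp |u| * |v| ≤ exp (2 * u) + exp (-(2 * u)) + v ^ 2 := by
  have hsq : exp |u| ^ 2 = exp |2 * u| := by
    rw [← exp_nat_mul, abs_mul, abs_two]; norm_num
  calc exp |u| * |v| ≤ exp |u| ^ 2 + |v| ^ 2 := by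
        nlinarith [two_mul_le_add_sq (exp |u|) |v|, exp_pos |u|, abs_nonneg v]
    _ = exp |2 * u| + v ^ 2 := by rw [hsq, sq_abs]
    _ ≤ exp (2 * u) + exp (-(2 * u)) + v ^ 2 := by gcongr; exact exp_abs_le _

lemma Real.hasSum_pow_div_factorial (x : ℝ) : HasSum (fun n : ℕ => x ^ n / n !) (exp x) :=
  exp_eq_exp_ℝ ▸ NormedSpace.expSeries_div_hasSum_exp x

section

variable {μ : Measure ℝ} {g : ℝ → ℝ} {t : ℝ}

lemma integrable_exp_abs_mul_of_integrable_sq_mul {a f : ℝ → ℝ} (ha0 : ∀ x, 0 ≤ a x)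
    (hfa : AEStronglyMeasurable (fun x => f x * a x) μ)
    (hpos : Integrable (fun x => exp (2 * t * x) * a x) μ)
    (hneg : Integrable (fun x => exp (-(2 * t) * x) * a x) μ)
    (hf2 : Integrable (fun x => f x ^ 2 * a x) μ) :
    Integrable (fun x => exp |t * x| * (f x * a x)) μ := by
  refine ((hpos.add hneg).add hf2).mono' ((by fun_prop : Continuous _).aestronglyMeasurable.mul hfa)
    (ae_of_all _ fun x => ?_)
  have h := mul_le_mul_of_nonneg_right (exp_abs_mul_abs_le (t * x) (f x)) (ha0 x)
  simp only [norm_mul, norm_of_nonneg (exp_pos _).le, norm_of_nonneg (ha0 x), norm_eq_abs,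
    Pi.add_apply, ← mul_assoc, neg_mul] at h ⊢
  linarith

lemma aestronglyMeasurable_of_integrable_exp_abs_mul
    (hg : Integrable (fun x => exp |t * x| * g x) μ) : AEStronglyMeasurable g μ := by
  refine ((by fun_prop : Continuous fun x => exp (-|t * x|)).aestronglyMeasurable.mul hg.1).congr
    (ae_of_all _ fun x => ?_)
  simp [← mul_assoc, ← exp_add]

lemma integrable_exp_mul_of_integrable_exp_abs_mul
    (hg : Integrable (fun x => exp |t * x| * g x) μ) :
    Integrable (fun x => exp (t * x) * g x) μ := by
  refine hg.mono ((by fun_prop : Continuous _).aestronglyMeasurable.mul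
    (aestronglyMeasurable_of_integrable_exp_abs_mul hg)) (ae_of_all _ fun x => ?_)
  simp only [norm_mul, norm_of_nonneg (exp_pos _).le]
  gcongr
  exact le_abs_self _

theorem hasSum_integral_exp_mul_of_integrable_exp_abs_mul
    (hg : Integrable (fun x => exp |t * x| * g x) μ) :
    HasSum (fun n : ℕ => t ^ n / n ! * ∫ x, x ^ n * g x ∂μ) (∫ x, exp (t * x) * g x ∂μ) := by
  have hterm (n : ℕ) : ∫ x, (t * x) ^ n / n ! * g x ∂μ = t ^ n / n ! * ∫ x, x ^ n * g x ∂μ := by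
    rw [← integral_const_mul]
    congr with x
    ring
  simp_rw [← hterm]
  refine hasSum_integral_of_dominated_convergence (fun n x => |t * x| ^ n / n ! * |g x|)
    (fun n => (by fun_prop : Continuous _).aestronglyMeasurable.mul
      (aestronglyMeasurable_of_integrable_exp_abs_mul hg))
    (fun n => ae_of_all _ fun x => ?_) (ae_of_all _ fun x => ?_) ?_ (ae_of_all _ fun x => ?_)
  · simp [norm_mul, norm_div, norm_pow]
  · exact (summable_pow_div_factorial _).mul_right _
  · simpa only [tsum_mul_right, (Real.hasSum_pow_div_factorial _).tsum_eq, norm_mul,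
      norm_of_nonneg (exp_pos _).le, norm_eq_abs] using hg.norm
  · exact (Real.hasSum_pow_div_factorial (t * x)).mul_right (g x)

end

theorem laplace_vanishes_of_moments_vanish_general
    (lam : Measure ℝ) (δ : ℝ)
    (a : ℝ → ℝ) (ha : Measurable a) (ha0 : ∀ x, 0 ≤ a x)
    (hM : ∀ s ∈ Set.Icc (-δ) δ,
      ∫⁻ x, ENNReal.ofReal (Real.exp (s * x) * a x) ∂lam < ⊤)
    (f : ℝ → ℝ) (hf : Measurable f)
    (hf2 : ∫⁻ x, ENNReal.ofReal (f x ^ 2 * a x) ∂lam < ⊤)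
    (hmom : ∀ k : ℕ, ∫ x, x ^ k * f x * a x ∂lam = 0) :
    ∀ t ∈ Set.Icc (-(δ / 2)) (δ / 2),
      Integrable (fun x => Real.exp (t * x) * f x * a x) lam ∧
      ∫ x, Real.exp (t * x) * f x * a x ∂lam = 0 := by
  have hintegrable {h : ℝ → ℝ} (hm : Measurable h) (h0 : ∀ x, 0 ≤ h x)
      (hlt : ∫⁻ x, ENNReal.ofReal (h x) ∂lam < ⊤) : Integrable h lam :=
    (lintegral_ofReal_ne_top_iff_integrable hm.aestronglyMeasurable (ae_of_all _ h0)).1 hlt.ne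
  have hexp (s : ℝ) (hs : s ∈ Set.Icc (-δ) δ) : Integrable (fun x => exp (s * x) * a x) lam :=
    hintegrable (by fun_prop) (fun x => mul_nonneg (exp_pos _).le (ha0 x)) (hM s hs)
  rintro t ⟨ht₁, ht₂⟩
  have hint : Integrable (fun x => exp |t * x| * (f x * a x)) lam :=
    integrable_exp_abs_mul_of_integrable_sq_mul ha0 (hf.mul ha).aestronglyMeasurable
      (hexp _ ⟨by linarith, by linarith⟩) (hexp _ ⟨by linarith, by linarith⟩)
      (hintegrable (by fun_prop) (fun x => mul_nonneg (sq_nonneg _) (ha0 x)) hf2)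
  simp_rw [mul_assoc] at hmom ⊢
  exact ⟨integrable_exp_mul_of_integrable_exp_abs_mul hint,
    (hasSum_integral_exp_mul_of_integrable_exp_abs_mul hint).unique (by simp [hmom])⟩

theorem laplace_vanishes_of_moments_vanish
    (lam : Measure ℝ) [SigmaFinite lam] (δ : ℝ) (hδ : 0 < δ)
    (a : ℝ → ℝ) (ha : Measurable a) (ha0 : ∀ x, 0 ≤ a x)
    (hM : ∀ s ∈ Set.Icc (-δ) δ,
      ∫⁻ x, ENNReal.ofReal (Real.exp (s * x) * a x) ∂lam < ⊤)
    (f : ℝ → ℝ) (hf : Measurable f)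
    (hf2 : ∫⁻ x, ENNReal.ofReal (f x ^ 2 * a x) ∂lam < ⊤)
    (hmom : ∀ k : ℕ, ∫ x, x ^ k * f x * a x ∂lam = 0) :
    ∀ t ∈ Set.Icc (-(δ / 2)) (δ / 2),
      Integrable (fun x => Real.exp (t * x) * f x * a x) lam ∧
      ∫ x, Real.exp (t * x) * f x * a x ∂lam = 0 :=
  laplace_vanishes_of_moments_vanish_general lam δ a ha ha0 hM f hf hf2 hmom
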